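/- Let ν > 0 and let W, n be Schwartz functions on ℝᵈ with -νΔW + W = n and n ≥ 0. Then ∫ |∇W|² dx ≤ ∫ n · (-ΔW) dx, and consequently, if additionally -∫ n ΔW dx ≤ A for some A ≥ 0, then ∫ |n - W|² dx ≤ ν A and ∫ |∇W|² dx ≤ A. -/

import Mathlib

/-! Substituting `n = W - ν ΔW` and integrating `W · ΔW` by parts gives the energy identity
`∫ n (-ΔW) = ∫ |∇W|² + ν ∫ (ΔW)²`, both terms on the right being nonnegative, while
`n - W = -ν ΔW` gives `∫ (n - W)² = ν · (ν ∫ (ΔW)²)`. -/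

open MeasureTheory

noncomputable def lap {d : ℕ} (W : EuclideanSpace ℝ (Fin d) → ℝ)
    (x : EuclideanSpace ℝ (Fin d)) : ℝ :=
  ∑ i : Fin d,
    fderiv ℝ (fun y => fderiv ℝ W y (EuclideanSpace.single i (1 : ℝ))) x
      (EuclideanSpace.single i (1 : ℝ))

open Laplacian LineDeriv SchwartzMap

section

variable {E : Type*} [NormedAddCommGroup E] [InnerProductSpace ℝ E] [FiniteDimensional ℝ E]

theorem norm_gradient_sq_eq_sum {ι : Type*} [Fintype ι] (b : OrthonormalBasis ι ℝ E)
    (f : E → ℝ) (x : E) :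
    ‖gradient f x‖ ^ 2 = ∑ i, fderiv ℝ f x (b i) ^ 2 := by
  simp_rw [← b.sum_sq_inner_left, inner_gradient_left]

variable [MeasurableSpace E] [BorelSpace E] {μ : Measure E} [μ.IsAddHaarMeasure]

theorem SchwartzMap.integrable_mul (f g : 𝓢(E, ℝ)) : Integrable (fun x => f x * g x) μ :=
  (pairing (ContinuousLinearMap.mul ℝ ℝ) f g).integrable

theorem SchwartzMap.integral_norm_gradient_sq (f : 𝓢(E, ℝ)) :
    ∫ x, ‖gradient f x‖ ^ 2 ∂μ = -∫ x, f x * Δ f x ∂μ := by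
  let b := stdOrthonormalBasis ℝ E
  have hsq : ∀ x, ‖gradient f x‖ ^ 2 = ∑ i, ∂_{b i} f x * ∂_{b i} f x := fun x => by
    simp_rw [norm_gradient_sq_eq_sum b, lineDerivOp_apply_eq_fderiv, sq]
  have hΔ : ∀ x, f x * Δ f x = ∑ i, f x * ∂_{b i} (∂_{b i} f) x := fun x => by
    rw [laplacian_eq_sum b, sum_apply, Finset.mul_sum]
  simp_rw [hsq, hΔ]
  rw [integral_finsetSum _ fun i _ => integrable_mul _ _,
    integral_finsetSum _ fun i _ => integrable_mul _ _, ← Finset.sum_neg_distrib]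
  simp_rw [integral_mul_lineDerivOp_right_eq_neg_left, neg_neg]

theorem SchwartzMap.integral_mul_neg_laplacian_of_brinkman {ν : ℝ} {W n : 𝓢(E, ℝ)}
    (h : ∀ x, -ν * Δ W x + W x = n x) :
    ∫ x, n x * -Δ W x ∂μ = ∫ x, ‖gradient W x‖ ^ 2 ∂μ + ν * ∫ x, Δ W x * Δ W x ∂μ := by
  have hpt : ∀ x, n x * -Δ W x = ν * (Δ W x * Δ W x) - W x * Δ W x := fun x => by
    rw [← h]; ring
  simp_rw [hpt]
  rw [integral_sub ((integrable_mul _ _).const_mul ν) (integrable_mul _ _), integral_const_mul,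
    integral_norm_gradient_sq]
  ring

end

theorem lap_eq_laplacian {d : ℕ} (W : 𝓢(EuclideanSpace ℝ (Fin d), ℝ)) :
    lap ⇑W = ⇑(Δ W : 𝓢(EuclideanSpace ℝ (Fin d), ℝ)) := by
  ext x
  simp_rw [lap, laplacian_eq_sum (EuclideanSpace.basisFun (Fin d) ℝ), sum_apply,
    EuclideanSpace.basisFun_apply, lineDerivOp_apply_eq_fderiv]
  rfl

theorem brinkman_combined_estimates_general {d : ℕ} (ν : ℝ) (hν : 0 < ν)
    (W n : SchwartzMap (EuclideanSpace ℝ (Fin d)) ℝ)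
    (hBrinkman : ∀ x, -ν * lap (⇑W) x + W x = n x) :
    (∫ x, ‖gradient (⇑W) x‖ ^ 2) ≤ ∫ x, n x * (-(lap (⇑W) x)) ∧
    ∀ A : ℝ, 0 ≤ A → (-∫ x, n x * lap (⇑W) x) ≤ A →
      (∫ x, (n x - W x) ^ 2 ≤ ν * A ∧ (∫ x, ‖gradient (⇑W) x‖ ^ 2) ≤ A) := by
  rw [lap_eq_laplacian] at hBrinkman ⊢
  have henergy := integral_mul_neg_laplacian_of_brinkman (μ := volume) hBrinkman
  have hgrad : 0 ≤ ∫ x, ‖gradient W x‖ ^ 2 := integral_nonneg fun x => by positivity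
  have hlap : 0 ≤ ν * ∫ x, Δ W x * Δ W x :=
    mul_nonneg hν.le (integral_nonneg fun x => mul_self_nonneg _)
  have hdist : ∫ x, (n x - W x) ^ 2 = ν * (ν * ∫ x, Δ W x * Δ W x) := by
    simp_rw [← hBrinkman, ← integral_const_mul]
    ring_nf
  rw [← integral_neg]
  simp_rw [← mul_neg]
  refine ⟨by linarith, fun A _ hA => ⟨?_, by linarith⟩⟩
  rw [hdist]
  exact mul_le_mul_of_nonneg_left (by linarith) hν.le

theorem brinkman_combined_estimates {d : ℕ} (ν : ℝ) (hν : 0 < ν)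
    (W n : SchwartzMap (EuclideanSpace ℝ (Fin d)) ℝ)
    (hBrinkman : ∀ x, -ν * lap (⇑W) x + W x = n x)
    (hn0 : ∀ x, 0 ≤ n x) :
    (∫ x, ‖gradient (⇑W) x‖ ^ 2) ≤ ∫ x, n x * (-(lap (⇑W) x)) ∧
    ∀ A : ℝ, 0 ≤ A → (-∫ x, n x * lap (⇑W) x) ≤ A →
      (∫ x, (n x - W x) ^ 2 ≤ ν * A ∧ (∫ x, ‖gradient (⇑W) x‖ ^ 2) ≤ A) :=
  brinkman_combined_estimates_general ν hν W n hBrinkman
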